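/- arXiv:2605.00277 — 3 statements merged into one kernel-verified Lean document; each statement's English description precedes it below -/
import Mathlib

section
/- Let V be a finite vertex set with distinguished s, d ∈ V, and T a natural number. There is a bijection between (i) finite-capacity (s,0)-(d,T) cuts of the time-expanded network on V × [0,T] (which contains infinite-capacity hold-over edges (i,t)→(i,t+1)), and (ii) functions φ : V → [0, T+1] with φ(s) = 0 and φ(d) = T+1, given by mapping φ to the cut whose source side is {(i, t) : t ≥ φ(i)}. -/
lemma climb_aux {V : Type} {T : ℕ} {S : Set (V × ℕ)}
    (hS : ∀ (i : V) (t : ℕ), t < T → (i, t) ∈ S → (i, t + 1) ∈ S)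
    {i : V} {u t : ℕ} (hu : (i, u) ∈ S) (hut : u ≤ t) (ht : t ≤ T) : (i, t) ∈ S := by
  induction t with
  | zero => simpa [Nat.le_zero.mp hut] using hu
  | succ n ih =>
    rcases Nat.lt_or_ge u (n + 1) with h | h
    · exact hS i n (by omega) (ih (by omega) (by omega))
    · have : u = n + 1 := le_antisymm hut h
      subst this; exact hu

attribute [local instance] Classical.propDecidable

theorem stmt_4 {V : Type} (T : ℕ) (s d : V) :
    ∃ e : {φ : V → ℕ // φ s = 0 ∧ φ d = T + 1 ∧ ∀ i, φ i ≤ T + 1} ≃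
        {S : Set (V × ℕ) // (s, 0) ∈ S ∧ (d, T) ∉ S ∧
          (∀ q ∈ S, Prod.snd q ≤ T) ∧
          (∀ (i : V) (t : ℕ), t < T → (i, t) ∈ S → (i, t + 1) ∈ S)},
      ∀ φ, (e φ).val = {q : V × ℕ | φ.val q.1 ≤ q.2 ∧ q.2 ≤ T} := by
  refine ⟨{
    toFun := fun φ => ⟨{q : V × ℕ | φ.val q.1 ≤ q.2 ∧ q.2 ≤ T},
      ⟨le_of_eq φ.2.1, Nat.zero_le _⟩,
      fun h => by have := φ.2.2.1; simp only [Set.mem_setOf_eq] at h; omega,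
      fun q hq => hq.2,
      fun i t ht hq => ⟨le_trans hq.1 (Nat.le_succ _), ht⟩⟩
    invFun := fun S => ⟨fun i =>
        if ∃ t, (i, t) ∈ S.val then sInf {t | (i, t) ∈ S.val} else T + 1,
      by
        obtain ⟨S, hs, hd, hb, hm⟩ := S
        simp only
        rw [if_pos ⟨0, hs⟩]
        exact Nat.le_zero.mp (Nat.sInf_le hs),
      by
        obtain ⟨S, hs, hd, hb, hm⟩ := S
        simp only
        rw [if_neg]
        rintro ⟨t, ht⟩
        exact hd (climb_aux hm ht (hb _ ht) le_rfl),
      by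
        intro i
        obtain ⟨S, hs, hd, hb, hm⟩ := S
        simp only
        split
        · rename_i h
          obtain ⟨t, ht⟩ := h
          exact le_trans (Nat.sInf_le ht) (le_trans (hb _ ht) (Nat.le_succ _))
        · exact le_rfl⟩
    left_inv := by
      rintro ⟨φ, hs, hd, hb⟩
      ext i
      simp only
      by_cases h : ∃ t, ((i, t) : V × ℕ) ∈ {q : V × ℕ | φ q.1 ≤ q.2 ∧ q.2 ≤ T}
      · rw [if_pos h]
        obtain ⟨t, ht⟩ := id h
        simp only [Set.mem_setOf_eq] at ht
        have h1 : φ i ≤ T := le_trans ht.1 ht.2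
        have h2 := Nat.sInf_mem (s := {t | ((i, t) : V × ℕ) ∈
          {q : V × ℕ | φ q.1 ≤ q.2 ∧ q.2 ≤ T}}) h
        simp only [Set.mem_setOf_eq] at h2
        refine le_antisymm (Nat.sInf_le ?_) h2.1
        simp only [Set.mem_setOf_eq]
        exact ⟨le_rfl, h1⟩
      · rw [if_neg h]
        push_neg at h
        have := hb i
        have h2 := h (φ i)
        simp only [Set.mem_setOf_eq] at h2
        omega
    right_inv := by
      rintro ⟨S, hs, hd, hb, hm⟩
      ext ⟨i, t⟩
      simp only [Set.mem_setOf_eq]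
      constructor
      · rintro ⟨h1, h2⟩
        by_cases h : ∃ u, (i, u) ∈ S
        · rw [if_pos h] at h1
          exact climb_aux hm (Nat.sInf_mem (s := {u | (i, u) ∈ S}) h) h1 h2
        · rw [if_neg h] at h1; omega
      · intro h
        refine ⟨?_, hb _ h⟩
        rw [if_pos ⟨t, h⟩]
        exact Nat.sInf_le h }, fun φ => rfl⟩
end

section
/- Let φ be a cut function corresponding to a minimum-capacity (s,0)-(d,T) cut in TEN(N, T), and let A ⊆ [0, T] contain 0, T, and every value of φ that lies in [0,T]. Then the minimum (s,0)-(d,T) cut capacity of cTEN(N, A, T) equals the minimum (s,0)-(d,T) cut capacity of TEN(N, T). -/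
theorem stmt_6 {V : Type} [Fintype V] (s d : V) (T τ : ℕ)
    (u : V → V → ℕ → ENNReal) (A : Set ℕ)
    (hA : A ⊆ Set.Icc 0 T) (h0 : 0 ∈ A) (hT : T ∈ A)
    (φmin : V → ℕ) (hs : φmin s = 0) (hd : φmin d = T + 1)
    (hb : ∀ i, φmin i ≤ T + 1)
    (hcrit : ∀ i : V, φmin i ≤ T → φmin i ∈ A)
    (hmin : (∑ i : V, ∑ j : V, ∑ t ∈ Finset.range (T + 1),
        if φmin i ≤ t ∧ t + τ ≤ T ∧ t + τ < φmin j then u i j t else 0) =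
      sInf {c : ENNReal | ∃ φ : V → ℕ, φ s = 0 ∧ φ d = T + 1 ∧
        (∀ i, φ i ≤ T + 1) ∧
        c = ∑ i : V, ∑ j : V, ∑ t ∈ Finset.range (T + 1),
          if φ i ≤ t ∧ t + τ ≤ T ∧ t + τ < φ j then u i j t else 0}) :
    sInf {c : ENNReal | ∃ φ : V → ℕ, φ s = 0 ∧ φ d = T + 1 ∧
        (∀ i, φ i ∈ A ∪ {T + 1}) ∧
        c = ∑ i : V, ∑ j : V, ∑ t ∈ Finset.range (T + 1),
          if φ i ≤ t ∧ t + τ ≤ T ∧ t + τ < φ j then u i j t else 0} =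
    sInf {c : ENNReal | ∃ φ : V → ℕ, φ s = 0 ∧ φ d = T + 1 ∧
        (∀ i, φ i ≤ T + 1) ∧
        c = ∑ i : V, ∑ j : V, ∑ t ∈ Finset.range (T + 1),
          if φ i ≤ t ∧ t + τ ≤ T ∧ t + τ < φ j then u i j t else 0} := by
  apply le_antisymm
  · rw [← hmin]
    apply sInf_le
    refine ⟨φmin, hs, hd, ?_, rfl⟩
    intro i
    rcases le_or_gt (φmin i) T with h | h
    · exact Or.inl (hcrit i h)
    · exact Or.inr (le_antisymm (hb i) h)
  · apply sInf_le_sInf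
    rintro c ⟨φ, h1, h2, h3, h4⟩
    refine ⟨φ, h1, h2, ?_, h4⟩
    intro i
    rcases h3 i with h | h
    · exact le_trans (hA h).2 (Nat.le_succ T)
    · exact le_of_eq h
end

section
/- Let N be a temporal network on vertex set V (|V| = n) with uniform static travel time τ and piecewise-constant capacities with breakpoint set 𝒯 (containing 0, T, T+1), and let critnet(N) = {θ + ℓτ : θ ∈ 𝒯, |ℓ| ≤ n}. Suppose φ is a cut function for TEN(N, T) such that some value φ(i) with i ∈ V lies outside critnet(N). Then the pinned assignments graph G_φ has a connected component C satisfying: C ⊆ V, C ∩ 𝒯 = ∅, and for all i ∈ C and all j ∉ C with an edge between i and j in the underlying network, |φ(i) − φ(j)| ∉ {0, τ}, and for all i ∈ C and θ ∈ 𝒯, |φ(i) − θ| ∉ {0, τ}. -/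
/-- The relation underlying the pinned assignments graph. -/
def pinnedRel {V : Type} (phi : V → ℤ) (tau : ℤ) (TT : Finset ℤ) :
    V ⊕ ℤ → V ⊕ ℤ → Prop
  | Sum.inl i, Sum.inl j => |phi i - phi j| = 0 ∨ |phi i - phi j| = tau
  | Sum.inl i, Sum.inr θ => θ ∈ TT ∧ (|phi i - θ| = 0 ∨ |phi i - θ| = tau)
  | Sum.inr _, _ => False

/-- The pinned assignments graph `G_φ` on `V ⊕ ℤ` (the `ℤ` part hosting `𝒯`). -/
def pinnedGraph {V : Type} (phi : V → ℤ) (tau : ℤ) (TT : Finset ℤ) :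
    SimpleGraph (V ⊕ ℤ) := SimpleGraph.fromRel (pinnedRel phi tau TT)

/-!
A walk in `G_φ` from `i ∈ V` to a breakpoint `θ'` changes `φ` by `0` or `±τ` along each
edge between vertices of `V`, and its last edge pins the last vertex of `V` to `θ'` up to
`0` or `±τ`. So `φ i = θ' + ℓ τ`, where `|ℓ|` is at most the number of vertices of `V` on
the walk, hence at most `n` for a path. A vertex with `φ i ∉ critnet(N)` therefore has no
breakpoint in its component, and the component, being closed under the edges of `G_φ`,
satisfies the non-coincidence conditions.
-/

open SimpleGraph

lemma exists_eq_add_mul_of_abs_sub {a b τ : ℤ} (h : |a - b| = 0 ∨ |a - b| = τ) :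
    ∃ δ : ℤ, |δ| ≤ 1 ∧ a = b + δ * τ := by
  rcases h with h | h
  · exact ⟨0, by simp, by simpa [sub_eq_zero] using h⟩
  · rcases (abs_eq (h ▸ abs_nonneg _)).mp h with h | h
    · exact ⟨1, by simp, by linarith⟩
    · exact ⟨-1, by simp, by linarith⟩

lemma length_filterMap_getLeft_le_card {α β : Type*} [Fintype α] {l : List (α ⊕ β)}
    (hl : l.Nodup) : (l.filterMap Sum.getLeft?).length ≤ Fintype.card α := by
  refine (hl.filterMap ?_).length_le_card
  rintro (a | a) (a' | a') b <;> simp_all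

section PinnedGraph

variable {V : Type} {φ : V → ℤ} {τ : ℤ} {TT : Finset ℤ}

lemma pinnedGraph_adj_inl_inl {i j : V} (hij : i ≠ j)
    (h : |φ i - φ j| = 0 ∨ |φ i - φ j| = τ) :
    (pinnedGraph φ τ TT).Adj (Sum.inl i) (Sum.inl j) := by
  simp only [pinnedGraph, fromRel_adj]
  exact ⟨by simpa using hij, Or.inl h⟩

lemma pinnedGraph_adj_inl_inr {i : V} {θ : ℤ} (hθ : θ ∈ TT)
    (h : |φ i - θ| = 0 ∨ |φ i - θ| = τ) :
    (pinnedGraph φ τ TT).Adj (Sum.inl i) (Sum.inr θ) := by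
  simp only [pinnedGraph, fromRel_adj]
  exact ⟨by simp, Or.inl ⟨hθ, h⟩⟩

lemma mem_and_abs_sub_of_pinnedGraph_adj_inl_inr {i : V} {θ : ℤ}
    (h : (pinnedGraph φ τ TT).Adj (Sum.inl i) (Sum.inr θ)) :
    θ ∈ TT ∧ (|φ i - θ| = 0 ∨ |φ i - θ| = τ) := by
  simp only [pinnedGraph, fromRel_adj] at h
  simpa [pinnedRel] using h.2

lemma abs_sub_of_pinnedGraph_adj_inl_inl {i j : V}
    (h : (pinnedGraph φ τ TT).Adj (Sum.inl i) (Sum.inl j)) :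
    |φ i - φ j| = 0 ∨ |φ i - φ j| = τ := by
  simp only [pinnedGraph, fromRel_adj] at h
  rcases h.2 with h | h
  · exact h
  · simpa only [pinnedRel, abs_sub_comm] using h

lemma exists_eq_add_mul_of_pinnedGraph_walk {x y : V ⊕ ℤ} (p : (pinnedGraph φ τ TT).Walk x y)
    (i : V) (θ : ℤ) (hx : x = Sum.inl i) (hy : y = Sum.inr θ) :
    ∃ θ' ∈ TT, ∃ ℓ : ℤ, |ℓ| ≤ (p.support.filterMap Sum.getLeft?).length ∧
      φ i = θ' + ℓ * τ := by
  induction p generalizing i with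
  | nil => simp_all
  | @cons x w _ h q ih =>
    subst hx
    have hlen : ((Walk.cons h q).support.filterMap Sum.getLeft?).length =
        (q.support.filterMap Sum.getLeft?).length + 1 := by
      simp [Walk.support_cons]
    rw [hlen]
    rcases w with k | θ''
    · obtain ⟨θ', hθ', ℓ, hℓ, hk⟩ := ih k rfl hy
      obtain ⟨δ, hδ, hik⟩ := exists_eq_add_mul_of_abs_sub (abs_sub_of_pinnedGraph_adj_inl_inl h)
      refine ⟨θ', hθ', ℓ + δ, ?_, by rw [hik, hk]; ring⟩
      have := abs_add_le ℓ δ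
      push_cast
      linarith
    · obtain ⟨hθ'', hi⟩ := mem_and_abs_sub_of_pinnedGraph_adj_inl_inr h
      obtain ⟨δ, hδ, hiθ⟩ := exists_eq_add_mul_of_abs_sub hi
      exact ⟨θ'', hθ'', δ, by push_cast; omega, hiθ⟩

end PinnedGraph

theorem stmt_18_general {V : Type} [Fintype V] (n : ℕ) (hn : Fintype.card V = n)
    (E : V → V → Prop) (τ : ℤ) (TT : Finset ℤ) (φ : V → ℤ)
    (hcrit : ∃ i : V, ¬ ∃ θ ∈ TT, ∃ ℓ : ℤ, |ℓ| ≤ (n : ℤ) ∧ φ i = θ + ℓ * τ) :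
    ∃ c : (pinnedGraph φ τ TT).ConnectedComponent,
      (∀ θ : ℤ, Sum.inr θ ∉ c.supp) ∧
      (∃ i : V, Sum.inl i ∈ c.supp) ∧
      (∀ i j : V, Sum.inl i ∈ c.supp → Sum.inl j ∉ c.supp → E i j →
        |φ i - φ j| ≠ 0 ∧ |φ i - φ j| ≠ τ) ∧
      (∀ (i : V), ∀ θ ∈ TT, Sum.inl i ∈ c.supp →
        |φ i - θ| ≠ 0 ∧ |φ i - θ| ≠ τ) := by
  classical
  obtain ⟨i, hi⟩ := hcrit
  set c := (pinnedGraph φ τ TT).connectedComponentMk (Sum.inl i)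
  have hc : ∀ θ : ℤ, Sum.inr θ ∉ c.supp := by
    intro θ hθ
    obtain ⟨p⟩ := c.reachable_of_mem_supp rfl hθ
    obtain ⟨θ', hθ', ℓ, hℓ, hφ⟩ :=
      exists_eq_add_mul_of_pinnedGraph_walk p.bypass i θ rfl rfl
    have hp := hn ▸ length_filterMap_getLeft_le_card p.bypass_isPath.support_nodup
    exact hi ⟨θ', hθ', ℓ, hℓ.trans (by exact_mod_cast hp), hφ⟩
  refine ⟨c, hc, ⟨i, rfl⟩, fun j k hj hk _ => ?_, fun j θ hθ hj => ?_⟩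
  · have hjk : j ≠ k := by rintro rfl; exact hk hj
    constructor <;> intro h <;>
      exact hk (c.mem_supp_of_adj_mem_supp hj (pinnedGraph_adj_inl_inl hjk (by simp [h])))
  · constructor <;> intro h <;>
      exact hc θ (c.mem_supp_of_adj_mem_supp hj (pinnedGraph_adj_inl_inr hθ (by simp [h])))

theorem stmt_18 {V : Type} [Fintype V] (n : ℕ) (hn : Fintype.card V = n)
    (E : V → V → Prop) (s d : V) (T τ : ℤ) (hτ : 0 < τ)
    (TT : Finset ℤ) (h0 : (0 : ℤ) ∈ TT) (hTm : T ∈ TT) (hTp : T + 1 ∈ TT)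
    (φ : V → ℤ) (hs : φ s = 0) (hd : φ d = T + 1)
    (hrange : ∀ i, 0 ≤ φ i ∧ φ i ≤ T + 1)
    (hcrit : ∃ i : V, ¬ ∃ θ ∈ TT, ∃ ℓ : ℤ, |ℓ| ≤ (n : ℤ) ∧ φ i = θ + ℓ * τ) :
    ∃ c : (pinnedGraph φ τ TT).ConnectedComponent,
      (∀ θ : ℤ, Sum.inr θ ∉ c.supp) ∧
      (∃ i : V, Sum.inl i ∈ c.supp) ∧
      (∀ i j : V, Sum.inl i ∈ c.supp → Sum.inl j ∉ c.supp → E i j →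
        |φ i - φ j| ≠ 0 ∧ |φ i - φ j| ≠ τ) ∧
      (∀ (i : V), ∀ θ ∈ TT, Sum.inl i ∈ c.supp →
        |φ i - θ| ≠ 0 ∧ |φ i - θ| ≠ τ) :=
  stmt_18_general n hn E τ TT φ hcrit
end
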